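/- In Shamir's (t+1)-out-of-n secret sharing over Z_p (p prime, p > n), if a secret s is shared via a uniformly random polynomial q of degree at most t with q(0) = s, then for every subset of at most t parties, the joint distribution of their shares (q(i))_{i in the subset} is independent of s; equivalently, for any two secrets s and s', the distributions of the shares held by those t parties are identical. -/

import Mathlib

/-!
Two secrets `s` and `s'` are told apart by a set `I` of at most `t` parties only through the
constant `s - s'` added to each of their shares. Since `#I ≤ t` and all evaluation points are
nonzero, Lagrange interpolation of `x ↦ (s - s') / x` on those points gives a polynomial `x * g x`
of degree at most `t`, without constant term, that equals `s - s'` on every share point.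
Adding its coefficients is then a bijection between the coefficient vectors producing given
shares for `s` and those producing them for `s'`.
-/

open Finset Polynomial

lemma exists_sum_mul_pow_succ_eq_const {K ι : Type*} [Field K] (α : ι → K)
    (hα0 : ∀ i, α i ≠ 0) {t : ℕ} (I : Finset ι) (hI : #I ≤ t) (d : K) :
    ∃ c : Fin t → K, ∀ i ∈ I, ∑ j : Fin t, c j * α i ^ ((j : ℕ) + 1) = d := by
  classical
  set g := Lagrange.interpolate (I.image α) id (fun x => d / x)
  have hg : g ∈ degreeLT K t := mem_degreeLT.2 <|
    (Lagrange.degree_interpolate_lt _ (Set.injOn_id _)).trans_le (mod_cast card_image_le.trans hI)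
  refine ⟨degreeLTEquiv K t ⟨g, hg⟩, fun i hi => ?_⟩
  have hnode : g.eval (α i) = d / α i :=
    Lagrange.eval_interpolate_at_node _ (Set.injOn_id _) (mem_image_of_mem α hi)
  calc ∑ j : Fin t, degreeLTEquiv K t ⟨g, hg⟩ j * α i ^ ((j : ℕ) + 1)
      = α i * g.eval (α i) := by
        rw [eval_eq_sum_degreeLTEquiv hg, mul_sum]
        exact sum_congr rfl fun j _ => by ring
    _ = d := by rw [hnode, mul_div_cancel₀ _ (hα0 i)]

theorem shamir_privacy_general (p : ℕ) [Fact p.Prime] (t n : ℕ)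
    (α : Fin n → ZMod p) (hα0 : ∀ i, α i ≠ 0)
    (I : Finset (Fin n)) (hI : I.card ≤ t) (s s' : ZMod p)
    (v : Fin n → ZMod p) :
    Nat.card {a : Fin t → ZMod p //
        ∀ i ∈ I, (s + ∑ j : Fin t, a j * (α i) ^ ((j : ℕ) + 1)) = v i}
      = Nat.card {a : Fin t → ZMod p //
        ∀ i ∈ I, (s' + ∑ j : Fin t, a j * (α i) ^ ((j : ℕ) + 1)) = v i} := by
  obtain ⟨c, hc⟩ := exists_sum_mul_pow_succ_eq_const α hα0 I hI (s - s')
  refine Nat.card_congr <|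
    Equiv.subtypeEquiv (Equiv.addRight c) fun a => forall₂_congr fun i hi => ?_
  have hshift : ∑ j : Fin t, (a + c) j * α i ^ ((j : ℕ) + 1)
      = ∑ j : Fin t, a j * α i ^ ((j : ℕ) + 1) + (s - s') := by
    simp only [Pi.add_apply, add_mul, sum_add_distrib, hc i hi]
  rw [Equiv.coe_addRight, hshift, add_comm _ (s - s'), ← add_assoc, add_sub_cancel]

/-- Shamir (t+1)-out-of-n secret sharing privacy: for any set `I` of at most `t` parties
(with distinct nonzero evaluation points `α i` in `ZMod p`, `p > n` prime), the number of
random coefficient vectors producing any given vector of shares for the parties in `I`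
is the same for the secret `s` as for the secret `s'`; hence the joint distribution of the
shares held by those parties is identical for the two secrets. -/
theorem shamir_privacy (p : ℕ) [Fact p.Prime] (t n : ℕ) (hn : n < p)
    (α : Fin n → ZMod p) (hα : Function.Injective α) (hα0 : ∀ i, α i ≠ 0)
    (I : Finset (Fin n)) (hI : I.card ≤ t) (s s' : ZMod p)
    (v : Fin n → ZMod p) :
    Nat.card {a : Fin t → ZMod p //
        ∀ i ∈ I, (s + ∑ j : Fin t, a j * (α i) ^ ((j : ℕ) + 1)) = v i}
      = Nat.card {a : Fin t → ZMod p //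
        ∀ i ∈ I, (s' + ∑ j : Fin t, a j * (α i) ^ ((j : ℕ) + 1)) = v i} :=
  shamir_privacy_general p t n α hα0 I hI s s' v
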